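/- Let γ be a scalar system of SL_n-type. Then there exist families a_{ij}, b_{ij} ∈ k, indexed by ordered pairs (i,j) of distinct elements of {1,…,n}, with each pair (a_{ij}, b_{ij}) not both zero and with a_{ij}·q^{λ_i−λ_j} − b_{ij}·q^{λ_j−λ_i} ≠ 0 for all λ ∈ ℤ^n, such that for ALL disjoint subsets S, T ⊆ {1,…,n} and all λ ∈ ℤ^n: γ(S,T;λ) · ∏_{i∈S}∏_{j∈T} (a_{ij}·q^{λ_i−λ_j} − b_{ij}·q^{λ_j−λ_i}) = ∏_{i∈S}∏_{j∈T} (a_{ij}·q^{λ_i−λ_j−1} − b_{ij}·q^{λ_j−λ_i+1}). (This explicit product form of every scalar system is the combinatorial core of the paper's classification theorem for semisimple actions of T\SL_n-type.) -/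

import Mathlib

open Finset

/-- The indicator vector `e_S ∈ ℤ^n` of a subset `S ⊆ {1,…,n}`. -/
def eVec (n : ℕ) (S : Finset (Fin n)) : Fin n → ℤ := fun i => if i ∈ S then 1 else 0

/-- A scalar system of `T\SL_n`-type: a family of scalars `γ(S,T;λ) ∈ k`
indexed by pairs of disjoint subsets `S, T ⊆ {1,…,n}` and `λ ∈ ℤ^n`,
invariant under `λ ↦ λ + (1,…,1)` and normalized on empty sets,
satisfying the relations (i)–(vi) of Definition 5.4 of the paper. -/
structure ScalarSystem (n : ℕ) (k : Type*) [Field k] (q : k) where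
  γ : Finset (Fin n) → Finset (Fin n) → (Fin n → ℤ) → k
  periodic : ∀ (S T : Finset (Fin n)) (lam : Fin n → ℤ),
    γ S T (lam + eVec n Finset.univ) = γ S T lam
  empty_left : ∀ (T : Finset (Fin n)) (lam : Fin n → ℤ), γ ∅ T lam = 1
  empty_right : ∀ (S : Finset (Fin n)) (lam : Fin n → ℤ), γ S ∅ lam = 1
  rel1 : ∀ (S T : Finset (Fin n)) (lam : Fin n → ℤ), Disjoint S T →
    γ S T lam * γ T S (lam - eVec n S) = 1
  rel2 : ∀ (S : Finset (Fin n)) (i j : Fin n) (lam : Fin n → ℤ),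
    i ≠ j → i ∉ S → j ∉ S →
    γ (insert i S) {j} lam * γ {j} S (lam - eVec n S)
      + γ (insert j S) {i} lam * γ {i} S (lam - eVec n S) = q + q⁻¹
  rel3 : ∀ (S : Finset (Fin n)) (i j : Fin n) (lam : Fin n → ℤ),
    i ≠ j → i ∉ S → j ∉ S →
    γ S {i} lam * γ {i} (insert j S) (lam - eVec n (insert j S))
      = γ (insert i S) {j} (lam - eVec n {j}) * γ {j} S (lam - eVec n (insert j S))
  rel4 : ∀ (S T U : Finset (Fin n)) (lam : Fin n → ℤ),
    Disjoint S T → Disjoint S U → Disjoint T U →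
    γ S T (lam + eVec n U) * γ (S ∪ T) U lam = γ S (T ∪ U) lam * γ T U lam
  rel5 : ∀ (i j : Fin n) (lam : Fin n → ℤ), i ≠ j →
    γ {i} {j} lam + γ {j} {i} lam = q + q⁻¹
  rel6 : ∀ (i j l : Fin n) (lam : Fin n → ℤ), i ≠ j → j ≠ l → i ≠ l →
    γ {i} {j, l} lam + γ {j} {l, i} lam + γ {l} {i, j} lam
      = q * q + 1 + q⁻¹ * q⁻¹

/-!
For three distinct indices, relations (i), (ii), (iv), (v), (vi) among the rank-two values
`γ({a},{b})`, `γ({a},{b,c})`, `γ({a,b},{c})` force `γ({i},{j,l}) = γ({i},{j}) γ({i},{l})`, and then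
(iv) shows that `γ({i},{j};λ)` is unchanged by `λ ↦ λ + e_l` for `l ∉ {i,j}`; with periodicity,
`γ({i},{j};λ)` depends only on `λ_i - λ_j`. Relations (i) and (v) turn `φ(d) = γ({i},{j}; d e_i)` into a
solution of the Riccati recursion `φ(d+1) (β - φ(d)) = 1`, `β = [2]_q`, which is linearized as
`φ(d) = f(d-1) / f(d)` with `f(d) = a q^d - b q^{-d}`. Finally (ii) and (iv), together with the shift
invariance, give `γ(S,T;λ) = ∏_{i∈S, j∈T} γ({i},{j};λ)` by induction on `S` and `T`.
-/

section

variable {k : Type*} [Field k]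

-- Read `xab` as `γ({a},{b})`, `ta` as `γ({a}, {i,j,l} \ {a})` and `uc` as `γ({i,j,l} \ {c}, {c})`.
theorem eq_mul_of_triangle_relations {β xij xji xjl xlj xli xil ti tj tl ui uj ul : k}
    (hβ : β ≠ 0) (hij : xij + xji = β) (hjl : xjl + xlj = β) (hli : xli + xil = β)
    (hul : β * ul = ti * xjl + tj * xil) (hui : β * ui = tj * xli + tl * xji)
    (huj : β * uj = tl * xij + ti * xlj)
    (hBl : uj * xli + ui * xlj = β * xli * xlj) (hBi : ul * xij + uj * xil = β * xij * xil)
    (hBj : ui * xjl + ul * xji = β * xjl * xji) (h6 : ti + tj + tl = β ^ 2 - 1) :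
    ti = xij * xil := by
  obtain rfl : xji = β - xij := by linear_combination hij
  obtain rfl : xlj = β - xjl := by linear_combination hjl
  obtain rfl : xil = β - xli := by linear_combination hli
  -- Eliminating the `u`s gives `K * ta = xab * xac` for each `a`; summed against `h6`, `K = 1`.
  set K := β ^ 2 - β * (xij + xjl + xli) + (xij * xjl + xjl * xli + xli * xij)
  have hKl : K * tl = xli * (β - xjl) := by
    linear_combination β * hBl - xli * huj - (β - xjl) * hui - (β - xjl) * xli * h6
  have hKi : K * ti = xij * (β - xli) := by
    linear_combination β * hBi - xij * hul - (β - xli) * huj - (β - xli) * xij * h6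
  have hKj : K * tj = xjl * (β - xij) := by
    linear_combination β * hBj - xjl * hui - (β - xij) * hul - (β - xij) * xjl * h6
  have hK : K = 1 := by
    have : (K - 1) * β ^ 2 = 0 := by linear_combination hKi + hKj + hKl - K * h6
    simpa [sub_eq_zero, hβ] using this
  simpa [hK] using hKi

def qFactor (q a b : k) (d : ℤ) : k := a * q ^ d - b * q ^ (-d)

theorem qFactor_add_one_add_qFactor_sub_one {q : k} (hq : q ≠ 0) (a b : k) (d : ℤ) :
    qFactor q a b (d + 1) + qFactor q a b (d - 1) = (q + q⁻¹) * qFactor q a b d := by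
  simp only [qFactor, neg_add, neg_sub, zpow_add₀ hq, zpow_sub₀ hq, zpow_one, zpow_neg]
  have := zpow_ne_zero d hq
  field_simp
  ring

theorem qFactor_sub_one_eq {q a b : k} (x y : ℤ) :
    qFactor q a b (x - y - 1) = a * q ^ (x - y - 1) - b * q ^ (y - x + 1) := by
  rw [qFactor, show -(x - y - 1) = y - x + 1 by ring]

theorem qFactor_sub_eq {q a b : k} (x y : ℤ) :
    qFactor q a b (x - y) = a * q ^ (x - y) - b * q ^ (y - x) := by
  rw [qFactor, neg_sub]

theorem ne_zero_and_mul_eq_of_riccati {β : k} {φ f : ℤ → k}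
    (hf : ∀ d, f (d + 1) + f (d - 1) = β * f d) (hφ : ∀ d, φ (d + 1) * (β - φ d) = 1)
    (hf₀ : f 0 ≠ 0) (hφ₀ : φ 0 * f 0 = f (-1)) (d : ℤ) :
    f d ≠ 0 ∧ φ d * f d = f (d - 1) := by
  induction d using Int.induction_on with
  | zero => exact ⟨hf₀, by simpa using hφ₀⟩
  | succ d ih =>
    obtain ⟨hfd, hφd⟩ := ih
    have h : φ (d + 1) * f (d + 1) = f d := by
      linear_combination f d * hφ d + φ (d + 1) * hf d + φ (d + 1) * hφd
    refine ⟨fun h0 ↦ hfd ?_, by simpa using h⟩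
    rw [← h, h0, mul_zero]
  | pred d ih =>
    obtain ⟨hfd, hφd⟩ := ih
    have hφ' := hφ (-d - 1)
    have hf' := hf (-d - 1)
    simp only [sub_add_cancel] at hφ' hf'
    refine ⟨?_, ?_⟩
    · rw [← hφd]
      exact mul_ne_zero (left_ne_zero_of_mul_eq_one hφ') hfd
    · linear_combination (β - φ (-d - 1)) * hφd - f (-d) * hφ' - hf'

theorem sub_inv_ne_zero_of_sq_ne_one {q : k} (hq : q ≠ 0) (h : q ^ 2 ≠ 1) : q - q⁻¹ ≠ 0 :=
  fun h₀ ↦ h (by linear_combination q * h₀ + mul_inv_cancel₀ hq)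

theorem add_inv_ne_zero_of_pow_four_ne_one {q : k} (hq : q ≠ 0) (h : q ^ 4 ≠ 1) :
    q + q⁻¹ ≠ 0 :=
  fun h₀ ↦ h (by linear_combination (q ^ 2 - 1) * (q * h₀ - mul_inv_cancel₀ hq))

end

namespace ScalarSystem

variable {n : ℕ} {k : Type*} [Field k] {q : k} (Γ : ScalarSystem n k q)

theorem γ_ne_zero {S T : Finset (Fin n)} (h : Disjoint S T) (lam : Fin n → ℤ) :
    Γ.γ S T lam ≠ 0 :=
  left_ne_zero_of_mul_eq_one (Γ.rel1 S T lam h)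

theorem mul_γ_pair_singleton {i j l : Fin n} (hij : i ≠ j) (hjl : j ≠ l) (hil : i ≠ l)
    (lam : Fin n → ℤ) :
    (q + q⁻¹) * Γ.γ {i, j} {l} lam
      = Γ.γ {i} {j, l} lam * Γ.γ {j} {l} lam + Γ.γ {j} {l, i} lam * Γ.γ {i} {l} lam := by
  have e₁ := Γ.rel4 {i} {j} {l} lam (by simpa) (by simpa) (by simpa)
  have e₂ := Γ.rel4 {j} {i} {l} lam (by simpa [eq_comm]) (by simpa) (by simpa)
  simp only [← insert_eq, pair_comm j i, pair_comm i l] at e₁ e₂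
  linear_combination e₁ + e₂ - Γ.γ {i, j} {l} lam * Γ.rel5 i j (lam + eVec n {l}) hij

theorem γ_pair_singleton_mul_add {i j l : Fin n} (hij : i ≠ j) (hjl : j ≠ l) (hil : i ≠ l)
    (lam : Fin n → ℤ) :
    Γ.γ {l, i} {j} lam * Γ.γ {l} {i} lam + Γ.γ {j, l} {i} lam * Γ.γ {l} {j} lam
      = (q + q⁻¹) * Γ.γ {l} {i} lam * Γ.γ {l} {j} lam := by
  have h₂ := Γ.rel2 {l} i j lam hij (by simpa) (by simpa)
  have h₁i := Γ.rel1 {l} {i} lam (by simpa [eq_comm])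
  have h₁j := Γ.rel1 {l} {j} lam (by simpa [eq_comm])
  rw [pair_comm i l] at h₂
  linear_combination Γ.γ {l} {i} lam * Γ.γ {l} {j} lam * h₂
    - Γ.γ {l, i} {j} lam * Γ.γ {l} {i} lam * h₁j - Γ.γ {j, l} {i} lam * Γ.γ {l} {j} lam * h₁i

theorem γ_singleton_pair (hβ : q + q⁻¹ ≠ 0) (hq : q ≠ 0) {i j l : Fin n} (hij : i ≠ j)
    (hjl : j ≠ l) (hil : i ≠ l) (lam : Fin n → ℤ) :
    Γ.γ {i} {j, l} lam = Γ.γ {i} {j} lam * Γ.γ {i} {l} lam := by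
  have h6 := Γ.rel6 i j l lam hij hjl hil
  refine eq_mul_of_triangle_relations hβ (Γ.rel5 i j lam hij) (Γ.rel5 j l lam hjl)
    (Γ.rel5 l i lam hil.symm) (Γ.mul_γ_pair_singleton hij hjl hil lam)
    (Γ.mul_γ_pair_singleton hjl hil.symm hij.symm lam) (Γ.mul_γ_pair_singleton hil.symm hij hjl.symm lam)
    (Γ.γ_pair_singleton_mul_add hij hjl hil lam) (Γ.γ_pair_singleton_mul_add hjl hil.symm hij.symm lam)
    (Γ.γ_pair_singleton_mul_add hil.symm hij hjl.symm lam) ?_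
  rw [h6]
  field_simp
  ring

theorem γ_pair_singleton (hβ : q + q⁻¹ ≠ 0) (hq : q ≠ 0) {i j l : Fin n} (hij : i ≠ j)
    (hjl : j ≠ l) (hil : i ≠ l) (lam : Fin n → ℤ) :
    Γ.γ {i, j} {l} lam = Γ.γ {i} {l} lam * Γ.γ {j} {l} lam := by
  refine mul_left_cancel₀ hβ ?_
  rw [Γ.mul_γ_pair_singleton hij hjl hil, Γ.γ_singleton_pair hβ hq hij hjl hil,
    Γ.γ_singleton_pair hβ hq hjl hil.symm hij.symm]
  linear_combination Γ.γ {i} {l} lam * Γ.γ {j} {l} lam * Γ.rel5 i j lam hij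

theorem γ_singleton_add_eVec (hβ : q + q⁻¹ ≠ 0) (hq : q ≠ 0) {i j l : Fin n} (hij : i ≠ j)
    (hjl : j ≠ l) (hil : i ≠ l) (lam : Fin n → ℤ) :
    Γ.γ {i} {j} (lam + eVec n {l}) = Γ.γ {i} {j} lam := by
  have e := Γ.rel4 {i} {j} {l} lam (by simpa) (by simpa) (by simpa)
  simp only [← insert_eq, Γ.γ_pair_singleton hβ hq hij hjl hil,
    Γ.γ_singleton_pair hβ hq hij hjl hil] at e
  refine mul_right_cancel₀ (mul_ne_zero (Γ.γ_ne_zero (S := {i}) (T := {l}) (by simpa) lam)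
    (Γ.γ_ne_zero (S := {j}) (T := {l}) (by simpa) lam)) ?_
  linear_combination e

theorem γ_singleton_eq_of_sub_eq (hβ : q + q⁻¹ ≠ 0) (hq : q ≠ 0) {i j : Fin n} (hij : i ≠ j)
    {lam mu : Fin n → ℤ} (h : lam i - lam j = mu i - mu j) :
    Γ.γ {i} {j} lam = Γ.γ {i} {j} mu := by
  set w : Fin n → ℤ := mu - lam - (mu i - lam i) • eVec n univ
  have hperiodic (l : Fin n) : Function.Periodic (Γ.γ {i} {j}) (Pi.single l (w l)) := by
    by_cases hl : l = i ∨ l = j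
    · have : w l = 0 := by
        rcases hl with rfl | rfl
        · simp [w, eVec]
        · simp [w, eVec]; omega
      simp [this]
    · have : Pi.single l (w l) = w l • eVec n {l} := by
        ext x; by_cases hx : x = l <;> simp [eVec, hx]
      rw [this]
      push Not at hl
      exact Function.Periodic.zsmul
        (fun lam ↦ Γ.γ_singleton_add_eVec hβ hq hij (Ne.symm hl.2) (Ne.symm hl.1) lam) _
  have hw : Function.Periodic (Γ.γ {i} {j}) w := by
    rw [← univ_sum_single w]
    exact sum_induction _ _ (fun _ _ ↦ Function.Periodic.add_period) (fun _ ↦ by simp)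
      fun l _ ↦ hperiodic l
  have hmu : mu = lam + (mu i - lam i) • eVec n univ + w := by simp only [w]; abel
  rw [hmu, hw, (Function.Periodic.zsmul (Γ.periodic {i} {j}) _) lam]

/-- Up to scaling, `[a : b]` is forced by `γ({i},{j};0) = f(-1) / f(0)`; it is normalized by
`a - b = q - q⁻¹`. -/
def factor (i j : Fin n) : ℤ → k := qFactor q (q - Γ.γ {i} {j} 0) (q⁻¹ - Γ.γ {i} {j} 0)

theorem factor_ne_zero_and_γ_singleton_mul (hβ : q + q⁻¹ ≠ 0) (hq : q ≠ 0) (hq₂ : q - q⁻¹ ≠ 0)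
    {i j : Fin n} (hij : i ≠ j) (lam : Fin n → ℤ) :
    Γ.factor i j (lam i - lam j) ≠ 0 ∧
      Γ.γ {i} {j} lam * Γ.factor i j (lam i - lam j) = Γ.factor i j (lam i - lam j - 1) := by
  set φ : ℤ → k := fun d ↦ Γ.γ {i} {j} (d • eVec n {i})
  have hφ (d : ℤ) : φ (d + 1) * (q + q⁻¹ - φ d) = 1 := by
    have h₁ := Γ.rel1 {i} {j} ((d + 1) • eVec n {i}) (by simpa)
    rw [show (d + 1) • eVec n {i} - eVec n {i} = d • eVec n {i} by module] at h₁
    linear_combination h₁ - φ (d + 1) * Γ.rel5 i j (d • eVec n {i}) hij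
  have hf₀ : Γ.factor i j 0 = q - q⁻¹ := by simp [factor, qFactor]
  have hφ₀ : φ 0 * Γ.factor i j 0 = Γ.factor i j (-1) := by
    simp only [φ, zero_smul, factor, qFactor, zpow_zero, zpow_neg, zpow_one, neg_neg]
    ring
  rw [Γ.γ_singleton_eq_of_sub_eq hβ hq hij (mu := (lam i - lam j) • eVec n {i})
    (by simp [eVec, hij.symm])]
  exact ne_zero_and_mul_eq_of_riccati (f := Γ.factor i j)
    (qFactor_add_one_add_qFactor_sub_one hq _ _) hφ (hf₀ ▸ hq₂) hφ₀ _

theorem γ_insert_singleton (hβ : q + q⁻¹ ≠ 0) {S : Finset (Fin n)} {s u : Fin n} (hsu : s ≠ u)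
    (hs : s ∉ S) (hu : u ∉ S) (lam : Fin n → ℤ)
    (hu_shift : Γ.γ S {u} (lam + eVec n {s}) = Γ.γ S {u} lam)
    (hs_shift : Γ.γ S {s} (lam + eVec n {u}) = Γ.γ S {s} lam) :
    Γ.γ (insert s S) {u} lam = Γ.γ S {u} lam * Γ.γ {s} {u} lam := by
  have ea := Γ.rel4 S {s} {u} lam (by simpa) (by simpa) (by simpa)
  have eb := Γ.rel4 S {u} {s} lam (by simpa) (by simpa) (by simpa [eq_comm])
  rw [union_singleton, ← insert_eq, hs_shift] at ea
  rw [union_singleton, ← insert_eq, pair_comm, hu_shift] at eb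
  have h₁s := Γ.rel1 S {s} lam (by simpa)
  have h₁u := Γ.rel1 S {u} lam (by simpa)
  have hQ : Γ.γ S {s, u} lam = Γ.γ S {s} lam * Γ.γ S {u} lam := by
    refine mul_left_cancel₀ hβ ?_
    linear_combination -Γ.γ S {s, u} lam * Γ.rel5 s u lam hsu - ea - eb
      - Γ.γ S {s} lam * Γ.γ (insert s S) {u} lam * h₁u
      - Γ.γ S {u} lam * Γ.γ (insert u S) {s} lam * h₁s
      + Γ.γ S {s} lam * Γ.γ S {u} lam * Γ.rel2 S s u lam hsu hs hu
  refine mul_left_cancel₀ (Γ.γ_ne_zero (T := {s}) (by simpa) lam) ?_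
  linear_combination ea + Γ.γ {s} {u} lam * hQ

theorem γ_insert_right {S T : Finset (Fin n)} {u : Fin n} (hST : Disjoint S T) (huS : u ∉ S)
    (huT : u ∉ T) (lam : Fin n → ℤ) (hshift : Γ.γ S T (lam + eVec n {u}) = Γ.γ S T lam)
    (hunion : Γ.γ (S ∪ T) {u} lam = Γ.γ S {u} lam * Γ.γ T {u} lam) :
    Γ.γ S (insert u T) lam = Γ.γ S T lam * Γ.γ S {u} lam := by
  have e := Γ.rel4 S T {u} lam hST (by simpa) (by simpa)
  rw [hshift, hunion, union_singleton] at e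
  refine mul_right_cancel₀ (Γ.γ_ne_zero (S := T) (T := {u}) (by simpa) lam) ?_
  linear_combination -e

theorem γ_eq_prod_singleton_right (hβ : q + q⁻¹ ≠ 0) (hq : q ≠ 0) {S : Finset (Fin n)}
    {u : Fin n} (hu : u ∉ S) (lam : Fin n → ℤ) :
    Γ.γ S {u} lam = ∏ s ∈ S, Γ.γ {s} {u} lam := by
  induction S using Finset.induction_on generalizing u lam with
  | empty => simp [Γ.empty_left]
  | insert s S hs ih =>
    rw [mem_insert, not_or] at hu
    have hshift {a b : Fin n} (ha : a ∉ S) (hb : b ∉ S) (hab : a ≠ b) :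
        Γ.γ S {a} (lam + eVec n {b}) = Γ.γ S {a} lam := by
      rw [ih ha, ih ha]
      exact prod_congr rfl fun t ht ↦ Γ.γ_singleton_add_eVec hβ hq (ne_of_mem_of_not_mem ht ha)
        hab (ne_of_mem_of_not_mem ht hb) _
    rw [Γ.γ_insert_singleton hβ (Ne.symm hu.1) hs hu.2 lam (hshift hu.2 hs hu.1)
      (hshift hs hu.2 (Ne.symm hu.1)), ih hu.2, prod_insert hs, mul_comm]

theorem γ_eq_prod (hβ : q + q⁻¹ ≠ 0) (hq : q ≠ 0) {S T : Finset (Fin n)} (hST : Disjoint S T)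
    (lam : Fin n → ℤ) :
    Γ.γ S T lam = ∏ i ∈ S, ∏ j ∈ T, Γ.γ {i} {j} lam := by
  induction T using Finset.induction_on generalizing lam with
  | empty => simp [Γ.empty_right]
  | insert u T hu ih =>
    rw [disjoint_insert_right] at hST
    have hshift : Γ.γ S T (lam + eVec n {u}) = Γ.γ S T lam := by
      rw [ih hST.2, ih hST.2]
      exact prod_congr rfl fun i hi ↦ prod_congr rfl fun j hj ↦
        Γ.γ_singleton_add_eVec hβ hq (ne_of_mem_of_not_mem hi (disjoint_right.1 hST.2 hj))
          (ne_of_mem_of_not_mem hj hu) (ne_of_mem_of_not_mem hi hST.1) _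
    have hunion : Γ.γ (S ∪ T) {u} lam = Γ.γ S {u} lam * Γ.γ T {u} lam := by
      rw [Γ.γ_eq_prod_singleton_right hβ hq (by simp [hST.1, hu]),
        Γ.γ_eq_prod_singleton_right hβ hq hST.1, Γ.γ_eq_prod_singleton_right hβ hq hu,
        prod_union hST.2]
    rw [Γ.γ_insert_right hST.2 hST.1 hu lam hshift hunion, ih hST.2,
      Γ.γ_eq_prod_singleton_right hβ hq hST.1, ← prod_mul_distrib]
    exact prod_congr rfl fun i _ ↦ by rw [prod_insert hu, mul_comm]

theorem γ_mul_prod_factor (hβ : q + q⁻¹ ≠ 0) (hq : q ≠ 0) (hq₂ : q - q⁻¹ ≠ 0)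
    {S T : Finset (Fin n)} (hST : Disjoint S T) (lam : Fin n → ℤ) :
    Γ.γ S T lam * ∏ i ∈ S, ∏ j ∈ T, Γ.factor i j (lam i - lam j)
      = ∏ i ∈ S, ∏ j ∈ T, Γ.factor i j (lam i - lam j - 1) := by
  rw [Γ.γ_eq_prod hβ hq hST, ← prod_mul_distrib]
  refine prod_congr rfl fun i hi ↦ ?_
  rw [← prod_mul_distrib]
  exact prod_congr rfl fun j hj ↦ (Γ.factor_ne_zero_and_γ_singleton_mul hβ hq hq₂
    (ne_of_mem_of_not_mem hi (disjoint_right.1 hST hj)) lam).2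

end ScalarSystem

theorem scalarSystem_explicit_form_general {n : ℕ}
    {k : Type*} [Field k]
    (q : k) (hq : q ≠ 0) (hroot : ∀ m : ℤ, m ≠ 0 → q ^ m ≠ 1)
    (Γ : ScalarSystem n k q) :
    ∃ a b : Fin n → Fin n → k,
      (∀ i j : Fin n, i ≠ j → ¬(a i j = 0 ∧ b i j = 0)) ∧
      (∀ (i j : Fin n), i ≠ j → ∀ lam : Fin n → ℤ,
        a i j * q ^ (lam i - lam j) - b i j * q ^ (lam j - lam i) ≠ 0) ∧
      (∀ (S T : Finset (Fin n)), Disjoint S T → ∀ lam : Fin n → ℤ,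
        Γ.γ S T lam *
            ∏ i ∈ S, ∏ j ∈ T,
              (a i j * q ^ (lam i - lam j) - b i j * q ^ (lam j - lam i))
          = ∏ i ∈ S, ∏ j ∈ T,
              (a i j * q ^ (lam i - lam j - 1) - b i j * q ^ (lam j - lam i + 1))) := by
  have hβ := add_inv_ne_zero_of_pow_four_ne_one hq (by exact_mod_cast hroot 4 (by norm_num))
  have hq₂ := sub_inv_ne_zero_of_sq_ne_one hq (by exact_mod_cast hroot 2 (by norm_num))
  refine ⟨fun i j ↦ q - Γ.γ {i} {j} 0, fun i j ↦ q⁻¹ - Γ.γ {i} {j} 0,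
    fun i j _ h ↦ hq₂ (by linear_combination h.1 - h.2), fun i j hij lam ↦ ?_,
    fun S T hST lam ↦ ?_⟩
  · rw [← qFactor_sub_eq]
    exact (Γ.factor_ne_zero_and_γ_singleton_mul hβ hq hq₂ hij lam).1
  · have h := Γ.γ_mul_prod_factor hβ hq hq₂ hST lam
    simp only [ScalarSystem.factor, qFactor_sub_one_eq] at h
    simpa only [qFactor_sub_eq] using h

/-- Every scalar system of `SL_n`-type has the explicit product form
`γ(S,T;λ) = ∏_{i∈S}∏_{j∈T} (a_{ij} q^{λ_i−λ_j−1} − b_{ij} q^{λ_j−λ_i+1})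
  / (a_{ij} q^{λ_i−λ_j} − b_{ij} q^{λ_j−λ_i})`
for parameters `[a_{ij} : b_{ij}] ∈ ℙ¹(k)` avoiding `q^{2ℤ}`. -/
theorem scalarSystem_explicit_form {n : ℕ} (hn : 1 ≤ n)
    {k : Type*} [Field k] [CharZero k]
    (q : k) (hq : q ≠ 0) (hroot : ∀ m : ℤ, m ≠ 0 → q ^ m ≠ 1)
    (Γ : ScalarSystem n k q) :
    ∃ a b : Fin n → Fin n → k,
      (∀ i j : Fin n, i ≠ j → ¬(a i j = 0 ∧ b i j = 0)) ∧
      (∀ (i j : Fin n), i ≠ j → ∀ lam : Fin n → ℤ,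
        a i j * q ^ (lam i - lam j) - b i j * q ^ (lam j - lam i) ≠ 0) ∧
      (∀ (S T : Finset (Fin n)), Disjoint S T → ∀ lam : Fin n → ℤ,
        Γ.γ S T lam *
            ∏ i ∈ S, ∏ j ∈ T,
              (a i j * q ^ (lam i - lam j) - b i j * q ^ (lam j - lam i))
          = ∏ i ∈ S, ∏ j ∈ T,
              (a i j * q ^ (lam i - lam j - 1) - b i j * q ^ (lam j - lam i + 1))) :=
  scalarSystem_explicit_form_general q hq hroot Γ
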